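/- arXiv:1312.3294 — 2 statements merged into one kernel-verified Lean document; each statement's English description precedes it below -/
import Mathlib

section
/- For an affinely independent family v₀,…,vₙ in ℝⁿ and a subset S of the index set, the affine span of {vᵢ : i ∈ S} equals the intersection over j ∉ S of the affine hyperplanes H_j := aff{vᵢ : i ≠ j}. -/
/-! For an affinely independent family, the spans of two subfamilies meet in the span of the common
points (`AffineIndependent.inf_affineSpan_eq_affineSpan_inter`). Iterating this over `j ∉ S`, since
`S = ⋂ j ∉ S, {i | i ≠ j}`, gives the claim; when `S = univ` the infimum is empty, and `⊤` is the
span of all `n + 1` points because they span `ℝⁿ`. -/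

theorem AffineIndependent.iInf_affineSpan_eq_affineSpan_biInter {k V P ι α : Type*} [Ring k]
    [Nontrivial k] [AddCommGroup V] [Module k V] [AddTorsor V P] {p : ι → P}
    (hp : AffineIndependent k p) (hspan : affineSpan k (Set.range p) = ⊤)
    (s : α → Set ι) {T : Set α} (hT : T.Finite) :
    ⨅ a ∈ T, affineSpan k (p '' s a) = affineSpan k (p '' ⋂ a ∈ T, s a) := by
  induction T, hT using Set.Finite.induction_on with
  | empty => simp [Set.image_univ, hspan]
  | @insert a T _ _ ih =>
    rw [iInf_insert, ih, Set.biInter_insert, hp.inf_affineSpan_eq_affineSpan_inter]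

/-- For affinely independent points `v₀, …, vₙ` in `ℝⁿ` and a subset `S` of the
index set, the affine span of `{vᵢ : i ∈ S}` equals the intersection over
`j ∉ S` of the hyperplanes `H_j = aff {vᵢ : i ≠ j}`. -/
theorem affineSpan_eq_iInf_hyperplanes {n : ℕ}
    (v : Fin (n + 1) → EuclideanSpace ℝ (Fin n))
    (hv : AffineIndependent ℝ v) (S : Set (Fin (n + 1))) :
    affineSpan ℝ (v '' S) =
      ⨅ j ∈ Sᶜ, affineSpan ℝ (v '' {i | i ≠ j}) := by
  have hspan : affineSpan ℝ (Set.range v) = ⊤ := by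
    rw [hv.affineSpan_eq_top_iff_card_eq_finrank_add_one]
    simp
  have hS : S = ⋂ j ∈ Sᶜ, {i | i ≠ j} := by
    ext i
    simp [not_imp_not]
  rw [hv.iInf_affineSpan_eq_affineSpan_biInter hspan _ Sᶜ.toFinite, ← hS]
end

section
/- Let S = ℝ[x, y, z] and for k = 0,…,n−1 define uₖ = (k+1)x − y − (k+1)k/2 · z and lₖ = (k+1)x + y − (k+1)k/2 · z. Let p_y : S → ℝ[x, z] be the evaluation y ↦ 0. Then p_y maps the ideal J_r = ⋂_{k=0}^{n−1} (uₖ^{r+1}, lₖ^{r+1}) into the principal ideal I_r = ((∏_{k=0}^{n−1}((k+1)x − (k+1)k/2 · z))^{r+1}) of ℝ[x, z]. -/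
/-!
Both `uₖ` and `lₖ` are sent by `p_y` to `qₖ = (k+1)x - binom(k+1,2) z`, so `qₖ^(r+1)` divides
`p_y f` for every `f ∈ J_r`. The `qₖ` are primes of the factorial ring `ℝ[x,z]`, pairwise
non-associated because their zeros `[k/2 : 1]` differ; so they are pairwise relatively prime and
the product of their `(r+1)`-st powers divides `p_y f`.
-/

open MvPolynomial

/-- `S = ℝ[x, y, z]` with `x = X 0`, `y = X 1`, `z = X 2`. -/
abbrev S3 := MvPolynomial (Fin 3) ℝ

/-- `R = ℝ[x, z]` with `x = X 0`, `z = X 1`. -/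
abbrev R2 := MvPolynomial (Fin 2) ℝ

/-- The evaluation `p_y : ℝ[x,y,z] → ℝ[x,z]`, `y ↦ 0` (fixing `x` and `z`). -/
noncomputable def pY : S3 →ₐ[ℝ] R2 :=
  aeval ![X 0, 0, X 1]

/-- The linear form `uₖ = (k+1)x - y - (k+1)k/2 · z` in `ℝ[x,y,z]`. -/
noncomputable def uForm (k : ℕ) : S3 :=
  C ((k : ℝ) + 1) * X 0 - X 1 - C (((k : ℝ) + 1) * k / 2) * X 2

/-- The linear form `lₖ = (k+1)x + y - (k+1)k/2 · z` in `ℝ[x,y,z]`. -/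
noncomputable def lForm (k : ℕ) : S3 :=
  C ((k : ℝ) + 1) * X 0 + X 1 - C (((k : ℝ) + 1) * k / 2) * X 2

section BinaryForms

theorem prime_X_zero_sub_C_mul_X_one {R : Type*} [CommRing R] [IsDomain R] (c : R) :
    Prime (X 0 - C c * X 1 : MvPolynomial (Fin 2) R) := by
  rw [← MulEquiv.prime_iff (finSuccEquiv R 1).toMulEquiv]
  have h : finSuccEquiv R 1 (X 0 - C c * X 1) = Polynomial.X - Polynomial.C (C c * X 0) := by
    rw [map_sub, map_mul, finSuccEquiv_X_zero, show (1 : Fin 2) = Fin.succ 0 from rfl,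
      finSuccEquiv_X_succ, finSuccEquiv_apply, eval₂Hom_C, RingHom.coe_comp, Function.comp_apply,
      Polynomial.C_mul]
  exact h ▸ Polynomial.prime_X_sub_C _

/-- Evaluating at the zero `(b, a)` of the divisor. -/
theorem eq_of_C_mul_X_zero_sub_C_mul_X_one_dvd {R : Type*} [CommRing R] {a b c d : R}
    (h : (C a * X 0 - C b * X 1 : MvPolynomial (Fin 2) R) ∣ C c * X 0 - C d * X 1) :
    c * b = d * a := by
  obtain ⟨g, hg⟩ := h
  have := congrArg (eval ![b, a]) hg
  simp only [map_sub, map_mul, eval_C, eval_X, Matrix.cons_val_zero, Matrix.cons_val_one,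
    Matrix.cons_val_fin_one] at this
  linear_combination this

variable {K : Type*} [Field K]

theorem prime_C_mul_X_zero_sub_C_mul_X_one {a : K} (ha : a ≠ 0) (b : K) :
    Prime (C a * X 0 - C b * X 1 : MvPolynomial (Fin 2) K) := by
  have h : C a * X 0 - C b * X 1 = C a * (X 0 - C (b / a) * X 1 : MvPolynomial (Fin 2) K) := by
    rw [mul_sub, ← mul_assoc, ← C_mul, mul_div_cancel₀ b ha]
  rw [h]
  exact (associated_unit_mul_right _ _ (ha.isUnit.map C)).prime
    (prime_X_zero_sub_C_mul_X_one _)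

theorem isRelPrime_C_mul_X_zero_sub_C_mul_X_one {a b c d : K} (ha : a ≠ 0) (h : c * b ≠ d * a) :
    IsRelPrime (C a * X 0 - C b * X 1 : MvPolynomial (Fin 2) K) (C c * X 0 - C d * X 1) :=
  (prime_C_mul_X_zero_sub_C_mul_X_one ha b).irreducible.isRelPrime_iff_not_dvd.mpr
    (mt eq_of_C_mul_X_zero_sub_C_mul_X_one_dvd h)

end BinaryForms

theorem dvd_map_of_mem_span_pair {R S F : Type*} [CommSemiring R] [CommSemiring S] [FunLike F R S]
    [RingHomClass F R S] (φ : F) {u l f : R} {q : S} (hu : q ∣ φ u) (hl : q ∣ φ l)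
    (hf : f ∈ Ideal.span {u, l}) : q ∣ φ f := by
  obtain ⟨a, b, rfl⟩ := Ideal.mem_span_pair.mp hf
  simpa only [map_add, map_mul] using dvd_add (hu.mul_left _) (hl.mul_left _)

theorem pY_uForm (k : ℕ) :
    pY (uForm k) = C ((k : ℝ) + 1) * X 0 - C (((k : ℝ) + 1) * k / 2) * X 1 := by
  simp [pY, uForm]

theorem pY_lForm (k : ℕ) :
    pY (lForm k) = C ((k : ℝ) + 1) * X 0 - C (((k : ℝ) + 1) * k / 2) * X 1 := by
  simp [pY, lForm]

theorem isRelPrime_pY_uForm {i j : ℕ} (hij : i ≠ j) : IsRelPrime (pY (uForm i)) (pY (uForm j)) := by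
  rw [pY_uForm, pY_uForm]
  refine isRelPrime_C_mul_X_zero_sub_C_mul_X_one (by positivity) fun h => hij ?_
  have : ((j : ℝ) + 1) * ((i : ℝ) + 1) * (i - j) = 0 := by linear_combination 2 * h
  exact_mod_cast sub_eq_zero.mp ((mul_eq_zero.mp this).resolve_left (by positivity))

/-- `p_y` maps the ideal `J_r = ⋂ₖ (uₖ^(r+1), lₖ^(r+1))` of `ℝ[x,y,z]` into the
principal ideal `I_r = ((∏ₖ ((k+1)x - (k+1)k/2 · z))^(r+1))` of `ℝ[x,z]`. -/
theorem pY_maps_Jr_into_Ir (n r : ℕ) (f : S3)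
    (hf : f ∈ ⨅ k : Fin n, Ideal.span {uForm k ^ (r + 1), lForm k ^ (r + 1)}) :
    pY f ∈ Ideal.span
      {(∏ k : Fin n, (C ((k : ℝ) + 1) * X 0 - C (((k : ℝ) + 1) * k / 2) * X 1 : R2)) ^ (r + 1)} := by
  rw [Ideal.mem_span_singleton, ← Finset.prod_pow]
  refine Fintype.prod_dvd_of_isRelPrime (fun i j hij => ?_) fun k => ?_
  · simp only [Function.onFun, ← pY_uForm]
    exact (isRelPrime_pY_uForm (Fin.val_injective.ne hij)).pow
  · refine dvd_map_of_mem_span_pair pY ?_ ?_ (Ideal.mem_iInf.mp hf k)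
    · rw [map_pow, pY_uForm]
    · rw [map_pow, pY_lForm]
end
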